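/- Let Ω ⊂ ℝ^d be open and bounded and let φ̄ ∈ C¹(ℝ^d) satisfy the structural assumption ∇φ̄(x) ≠ 0 for every x ∈ {φ̄ = 0} ∩ cl(Ω). Let ū ∈ U_ad satisfy the first-order condition ∫_Ω φ̄ (u − ū) dλ^d ≥ 0 for all u ∈ U_ad. Then there exists c > 0 such that ∫_Ω φ̄ (u − ū) dλ^d ≥ c · ‖u − ū‖_{L¹(Ω)}² for all u ∈ U_ad. -/

import Mathlib

/-!
Testing the first-order condition with the bang-bang control `-sign φ̄` shows that `ū = -sign φ̄`
wherever `φ̄ ≠ 0`, so that `φ̄ (u - ū) = |φ̄| |u - ū|` for every admissible `u`.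

The structural assumption gives `λ(Ω ∩ {|φ̄| ≤ ε}) ≤ C ε`. Near a zero of `φ̄` there is a unit
direction `e` along which `φ̄` increases at rate at least `m > 0` on a ball; then the translates
of the `ε`-sublevel set of the ball by the multiples of `(3ε/m) • e` are pairwise disjoint and stay
in the doubled ball, so there are `≈ m r / ε` of them. Compactness of `cl Ω` globalizes the bound.

Splitting `Ω` at `|φ̄| = ε` then gives `∫ φ̄ (u - ū) ≥ ε (‖u - ū‖₁ - 2 C ε)`, and
`ε = ‖u - ū‖₁ / (4 C)` yields the quadratic growth.
-/

open MeasureTheory Set Metric Filter Topology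
open scoped Pointwise

theorem ContinuousLinearMap.exists_norm_eq_one_and_pos_apply {E : Type*} [NormedAddCommGroup E]
    [NormedSpace ℝ E] {L : E →L[ℝ] ℝ} (hL : L ≠ 0) : ∃ e : E, ‖e‖ = 1 ∧ 0 < L e := by
  obtain ⟨v, hv⟩ : ∃ v, 0 < L v := by
    obtain ⟨v, hv⟩ : ∃ v, L v ≠ 0 := by
      by_contra! h
      exact hL (ContinuousLinearMap.ext h)
    rcases hv.lt_or_gt with h | h
    exacts [⟨-v, by simpa using h⟩, ⟨v, h⟩]
  have hv0 : v ≠ 0 := by rintro rfl; simp at hv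
  exact ⟨‖v‖⁻¹ • v, norm_smul_inv_norm hv0, by simpa using mul_pos (by positivity) hv⟩

theorem natCast_mul_measure_le_of_pairwiseDisjoint_vadd {G : Type*} [AddGroup G]
    [MeasurableSpace G] [MeasurableAdd G] {μ : Measure G} [μ.IsAddLeftInvariant] {A B : Set G}
    (hA : MeasurableSet A) {n : ℕ} (v : ℕ → G) (hdisj : (Finset.range n : Set ℕ).PairwiseDisjoint (fun k => v k +ᵥ A))
    (hsub : ∀ k < n, v k +ᵥ A ⊆ B) : n * μ A ≤ μ B :=
  calc n * μ A = ∑ k ∈ Finset.range n, μ (v k +ᵥ A) := by simp [measure_vadd]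
    _ = μ (⋃ k ∈ Finset.range n, v k +ᵥ A) :=
      (measure_biUnion_finset hdisj fun k _ => hA.const_vadd (v k)).symm
    _ ≤ μ B := measure_mono <| iUnion₂_subset fun k hk => hsub k (Finset.mem_range.1 hk)

section Sublevel

variable {E : Type*} [NormedAddCommGroup E] [NormedSpace ℝ E] {φ : E → ℝ}

theorem mul_le_sub_of_le_fderiv_apply {S : Set E} (hS : Convex ℝ S) (hφ : Differentiable ℝ φ)
    {e : E} {m : ℝ} (hder : ∀ y ∈ S, m ≤ fderiv ℝ φ y e) {x : E} {t : ℝ} (ht : 0 ≤ t)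
    (hx : x ∈ S) (hxt : x + t • e ∈ S) : m * t ≤ φ (x + t • e) - φ x := by
  have hline : ∀ s : ℝ, HasDerivAt (fun s : ℝ => φ (x + s • e)) (fderiv ℝ φ (x + s • e) e) s :=
    fun s => (hφ _).hasFDerivAt.comp_hasDerivAt s
      (((hasDerivAt_id s).smul_const e).const_add x |>.congr_deriv (one_smul ℝ e))
  have hseg : ∀ s ∈ Icc (0 : ℝ) t, x + s • e ∈ S := by
    intro s hs
    rcases ht.eq_or_lt with rfl | ht
    · obtain rfl : s = 0 := le_antisymm hs.2 hs.1
      simpa using hx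
    have : x + s • e = x + (s / t) • ((x + t • e) - x) := by
      rw [add_sub_cancel_left, smul_smul, div_mul_cancel₀ _ ht.ne']
    rw [this]
    exact hS.add_smul_sub_mem hx hxt ⟨div_nonneg hs.1 ht.le, div_le_one_of_le₀ hs.2 ht.le⟩
  simpa using (convex_Icc (0 : ℝ) t).mul_sub_le_image_sub_of_le_deriv
    (fun s _ => (hline s).continuousAt.continuousWithinAt)
    (fun s _ => (hline s).differentiableAt.differentiableWithinAt)
    (fun s hs => (hline s).deriv ▸ hder _ (hseg s (interior_subset hs)))
    0 ⟨le_rfl, ht⟩ t ⟨ht, le_rfl⟩ ht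

theorem pairwiseDisjoint_smul_vadd_inter_abs_le {S : Set E} (hS : Convex ℝ S)
    (hφ : Differentiable ℝ φ) {e : E} {m s ε : ℝ} (hder : ∀ y ∈ S, m ≤ fderiv ℝ φ y e)
    (hm : 0 ≤ m) (hs : 0 ≤ s) (hms : 2 * ε < m * s) :
    (univ : Set ℕ).PairwiseDisjoint fun k : ℕ => (k * s) • e +ᵥ (S ∩ {x | |φ x| ≤ ε}) := by
  have hsep : ∀ j k : ℕ, j < k →
      Disjoint ((j * s) • e +ᵥ (S ∩ {x | |φ x| ≤ ε})) ((k * s) • e +ᵥ (S ∩ {x | |φ x| ≤ ε})) := by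
    intro j k hjk
    refine Set.disjoint_left.2 fun y hyj hyk => ?_
    simp only [Set.mem_vadd_set, vadd_eq_add] at hyj hyk
    obtain ⟨a, ⟨haS, ha⟩, rfl⟩ := hyk
    obtain ⟨b, ⟨hbS, hb⟩, hab⟩ := hyj
    have hkj : (1 : ℝ) ≤ k - j := by
      rw [le_sub_iff_add_le']; exact_mod_cast hjk
    obtain rfl : b = a + ((k - j) * s) • e := by
      rw [sub_mul, sub_smul, eq_sub_of_add_eq' hab]; abel
    have hslope := mul_le_sub_of_le_fderiv_apply hS hφ hder (by positivity) haS hbS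
    have : m * s ≤ m * ((k - j) * s) := by gcongr; nlinarith
    linarith [abs_le.1 (show |φ a| ≤ ε from ha), abs_le.1 (show |φ _| ≤ ε from hb)]
  intro j _ k _ hjk
  rcases hjk.lt_or_gt with h | h
  exacts [hsep j k h, (hsep k j h).symm]

variable [MeasurableSpace E] [BorelSpace E] {μ : Measure E} [μ.IsAddLeftInvariant]

theorem measure_closedBall_inter_abs_le_le_of_le_fderiv (hφ : Differentiable ℝ φ) {x₀ e : E}
    (he : ‖e‖ = 1) {m r ε : ℝ} (hm : 0 < m) (hder : ∀ y ∈ closedBall x₀ r, m ≤ fderiv ℝ φ y e)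
    (hε : 0 < ε) (hεr : 6 * ε ≤ m * r) :
    μ (closedBall x₀ r ∩ {x | |φ x| ≤ ε}) ≤
      ENNReal.ofReal (6 * ε / (m * r)) * μ (closedBall x₀ (2 * r)) := by
  set A := closedBall x₀ r ∩ {x | |φ x| ≤ ε}
  have hr : 0 < r := pos_of_mul_pos_right (by linarith) hm.le
  set s := 3 * ε / m with hs
  have hs0 : 0 < s := by positivity
  have hrs : 2 ≤ r / s := by rw [le_div_iff₀ hs0, hs]; field_simp; linarith
  set n := ⌊r / s⌋₊
  have hns : n * s ≤ r := (le_div_iff₀ hs0).1 (Nat.floor_le (by linarith))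
  have hn : r / (2 * s) ≤ n := by
    have := Nat.lt_floor_add_one (r / s)
    have : r / (2 * s) = r / s / 2 := by rw [div_div, mul_comm]
    linarith
  have hA : MeasurableSet A :=
    (isClosed_closedBall.inter (isClosed_le (hφ.continuous.abs) continuous_const)).measurableSet
  have hdisj := (pairwiseDisjoint_smul_vadd_inter_abs_le (convex_closedBall x₀ r) hφ hder hm.le
    hs0.le (ε := ε) (by rw [hs, mul_div_cancel₀ _ hm.ne']; linarith)).subset
    (subset_univ (Finset.range n : Set ℕ))
  have hsub : ∀ k < n, ((k * s) • e) +ᵥ A ⊆ closedBall x₀ (2 * r) := by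
    intro k hk
    have hks : (k : ℝ) * s ≤ r := le_trans (by gcongr) hns
    refine (vadd_set_mono inter_subset_left).trans ?_
    rw [vadd_closedBall]
    refine closedBall_subset_closedBall' ?_
    rw [dist_vadd_left, norm_smul, he, mul_one, Real.norm_of_nonneg (by positivity)]
    linarith
  have hcount := natCast_mul_measure_le_of_pairwiseDisjoint_vadd (μ := μ) hA _ hdisj hsub
  have hinv : 6 * ε / (m * r) * (r / (2 * s)) = 1 := by rw [hs]; field_simp; ring
  calc μ A = ENNReal.ofReal (6 * ε / (m * r)) * (ENNReal.ofReal (r / (2 * s)) * μ A) := by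
        rw [← mul_assoc, ← ENNReal.ofReal_mul (by positivity), hinv, ENNReal.ofReal_one, one_mul]
    _ ≤ ENNReal.ofReal (6 * ε / (m * r)) * (n * μ A) := by
        gcongr
        rw [← ENNReal.ofReal_natCast]; exact ENNReal.ofReal_le_ofReal hn
    _ ≤ _ := by gcongr

end Sublevel

def LinearSublevelBound {α : Type*} [MeasurableSpace α] (μ : Measure α) (φ : α → ℝ) (S : Set α) :
    Prop :=
  ∃ C : ℝ, ∀ᶠ ε in 𝓝[>] (0 : ℝ), μ (S ∩ {x | |φ x| ≤ ε}) ≤ ENNReal.ofReal (C * ε)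

namespace LinearSublevelBound

variable {α : Type*} [MeasurableSpace α] {μ : Measure α} {φ : α → ℝ} {S T : Set α}

theorem empty : LinearSublevelBound μ φ ∅ := ⟨0, by simp⟩

theorem mono (hST : S ⊆ T) (hT : LinearSublevelBound μ φ T) : LinearSublevelBound μ φ S :=
  let ⟨C, hC⟩ := hT
  ⟨C, hC.mono fun _ hε => (measure_mono (inter_subset_inter_left _ hST)).trans hε⟩

theorem union (hS : LinearSublevelBound μ φ S) (hT : LinearSublevelBound μ φ T) :
    LinearSublevelBound μ φ (S ∪ T) := by
  obtain ⟨C₁, h₁⟩ := hS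
  obtain ⟨C₂, h₂⟩ := hT
  refine ⟨max C₁ 0 + max C₂ 0, ?_⟩
  filter_upwards [h₁, h₂, self_mem_nhdsWithin] with ε hε₁ hε₂ (hε : 0 < ε)
  calc μ ((S ∪ T) ∩ {x | |φ x| ≤ ε})
      ≤ μ (S ∩ {x | |φ x| ≤ ε}) + μ (T ∩ {x | |φ x| ≤ ε}) := by
        rw [union_inter_distrib_right]; exact measure_union_le _ _
    _ ≤ ENNReal.ofReal (max C₁ 0 * ε) + ENNReal.ofReal (max C₂ 0 * ε) := by
        gcongr
        · exact hε₁.trans (by gcongr; exact le_max_left _ _)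
        · exact hε₂.trans (by gcongr; exact le_max_left _ _)
    _ = ENNReal.ofReal ((max C₁ 0 + max C₂ 0) * ε) := by
        rw [← ENNReal.ofReal_add (by positivity) (by positivity), add_mul]

theorem exists_forall_le (hS : μ S ≠ ⊤) (h : LinearSublevelBound μ φ S) :
    ∃ C > 0, ∀ ε > 0, μ (S ∩ {x | |φ x| ≤ ε}) ≤ ENNReal.ofReal (C * ε) := by
  obtain ⟨C₀, hC₀⟩ := h
  obtain ⟨ε₀, hε₀ : 0 < ε₀, hsmall⟩ := mem_nhdsGT_iff_exists_Ioo_subset.1 hC₀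
  refine ⟨max (max C₀ ((μ S).toReal / ε₀)) 1, by positivity, fun ε hε => ?_⟩
  rcases lt_or_ge ε ε₀ with hlt | hge
  · exact (hsmall ⟨hε, hlt⟩).trans (by gcongr; exact (le_max_left _ _).trans (le_max_left _ _))
  · calc μ (S ∩ {x | |φ x| ≤ ε}) ≤ μ S := measure_mono inter_subset_left
      _ = ENNReal.ofReal ((μ S).toReal / ε₀ * ε₀) := by
          rw [div_mul_cancel₀ _ hε₀.ne', ENNReal.ofReal_toReal hS]
      _ ≤ _ := by
          gcongr
          exact (le_max_right _ _).trans (le_max_left _ _)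

end LinearSublevelBound

theorem exists_mem_nhds_linearSublevelBound_of_ne_zero {α : Type*} [TopologicalSpace α]
    [MeasurableSpace α] (μ : Measure α) {φ : α → ℝ} {x₀ : α} (hφ : ContinuousAt φ x₀)
    (h : φ x₀ ≠ 0) : ∃ t ∈ 𝓝 x₀, LinearSublevelBound μ φ t := by
  have hpos : 0 < |φ x₀| := abs_pos.2 h
  refine ⟨{x | |φ x₀| / 2 < |φ x|}, hφ.abs.eventually (lt_mem_nhds (half_lt_self hpos)), 0, ?_⟩
  filter_upwards [Ioo_mem_nhdsGT (half_pos hpos)] with ε hε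
  have : {x | |φ x₀| / 2 < |φ x|} ∩ {x | |φ x| ≤ ε} = ∅ :=
    eq_empty_of_forall_notMem fun x hx => hx.2.not_gt (hε.2.trans hx.1)
  simp [this]

section Compact

variable {E : Type*} [NormedAddCommGroup E] [NormedSpace ℝ E] [ProperSpace E] {φ : E → ℝ}
  [MeasurableSpace E] [BorelSpace E] {μ : Measure E} [μ.IsAddLeftInvariant]
  [IsFiniteMeasureOnCompacts μ]

theorem exists_mem_nhds_linearSublevelBound_of_fderiv_ne_zero (hφ : ContDiff ℝ 1 φ) {x₀ : E}
    (h : fderiv ℝ φ x₀ ≠ 0) :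
    ∃ t ∈ 𝓝 x₀, LinearSublevelBound μ φ t := by
  obtain ⟨e, he, hpos⟩ := ContinuousLinearMap.exists_norm_eq_one_and_pos_apply h
  set m := fderiv ℝ φ x₀ e / 2
  have hm : 0 < m := by positivity
  have hnear : ∀ᶠ y in 𝓝 x₀, m < fderiv ℝ φ y e :=
    ((hφ.continuous_fderiv one_ne_zero).clm_apply continuous_const).continuousAt.eventually
      (lt_mem_nhds (half_lt_self hpos))
  obtain ⟨r, hr, hball⟩ := nhds_basis_closedBall.mem_iff.1 hnear
  refine ⟨closedBall x₀ r, closedBall_mem_nhds x₀ hr,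
    6 / (m * r) * (μ (closedBall x₀ (2 * r))).toReal, ?_⟩
  filter_upwards [Ioo_mem_nhdsGT (show 0 < m * r / 6 by positivity)] with ε ⟨hε, hεr⟩
  calc μ (closedBall x₀ r ∩ {x | |φ x| ≤ ε})
      ≤ ENNReal.ofReal (6 * ε / (m * r)) * μ (closedBall x₀ (2 * r)) :=
        measure_closedBall_inter_abs_le_le_of_le_fderiv (hφ.differentiable one_ne_zero) he hm
          (fun y hy => (hball hy).le) hε (by linarith)
    _ = ENNReal.ofReal (6 / (m * r) * (μ (closedBall x₀ (2 * r))).toReal * ε) := by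
        rw [← ENNReal.ofReal_toReal measure_closedBall_lt_top.ne,
          ← ENNReal.ofReal_mul (by positivity)]
        congr 1
        rw [ENNReal.toReal_ofReal ENNReal.toReal_nonneg]
        ring

theorem IsCompact.linearSublevelBound {K : Set E} (hK : IsCompact K) (hφ : ContDiff ℝ 1 φ)
    (hreg : ∀ x ∈ K, φ x = 0 → fderiv ℝ φ x ≠ 0) :
    LinearSublevelBound μ φ K := by
  refine hK.induction_on .empty (fun _ _ hst ht => ht.mono hst) (fun _ _ => .union) fun x hx => ?_
  obtain ⟨t, ht, hbound⟩ := if h : φ x = 0 then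
      exists_mem_nhds_linearSublevelBound_of_fderiv_ne_zero hφ (hreg x hx h)
    else exists_mem_nhds_linearSublevelBound_of_ne_zero μ hφ.continuous.continuousAt h
  exact ⟨t, mem_nhdsWithin_of_mem_nhds ht, hbound⟩

end Compact

theorem mul_sub_eq_abs_mul_abs_of_mul_eq_neg_abs {a b c : ℝ} (hb : |b| ≤ 1) (hac : a * c = -|a|) :
    a * (b - c) = |a| * |b - c| := by
  rcases lt_trichotomy a 0 with ha | rfl | ha
  · obtain rfl : c = 1 := by rw [abs_of_neg ha] at hac; nlinarith
    rw [abs_of_neg ha, abs_of_nonpos (by linarith [(abs_le.1 hb).2])]; ring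
  · simp
  · obtain rfl : c = -1 := by rw [abs_of_pos ha] at hac; nlinarith
    rw [abs_of_pos ha, abs_of_nonneg (by linarith [(abs_le.1 hb).1])]

section Growth

variable {α : Type*} [MeasurableSpace α] {μ : Measure α} {φ : α → ℝ}

theorem ae_mul_eq_neg_abs_of_forall_integral_nonneg (hφm : Measurable φ) (hφ : Integrable φ μ)
    {ubar : α → ℝ} (hubar : AEStronglyMeasurable ubar μ) (hubar1 : ∀ᵐ x ∂μ, |ubar x| ≤ 1)
    (hFON : ∀ u : α → ℝ, AEStronglyMeasurable u μ → (∀ᵐ x ∂μ, |u x| ≤ 1) →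
      0 ≤ ∫ x, φ x * (u x - ubar x) ∂μ) :
    ∀ᵐ x ∂μ, φ x * ubar x = -|φ x| := by
  set u₀ : α → ℝ := fun x => if 0 < φ x then -1 else 1
  have hu₀ : ∀ x, φ x * u₀ x = -|φ x| := by
    intro x
    by_cases h : 0 < φ x
    · simp [u₀, h, abs_of_pos h]
    · simp [u₀, h, abs_of_nonpos (not_lt.1 h)]
  have hgap : ∀ᵐ x ∂μ, 0 ≤ φ x * ubar x + |φ x| := by
    filter_upwards [hubar1] with x hx
    have : |φ x * ubar x| ≤ |φ x| := by
      rw [abs_mul]; exact mul_le_of_le_one_right (abs_nonneg _) hx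
    linarith [neg_abs_le (φ x * ubar x)]
  have hint : Integrable (fun x => φ x * ubar x + |φ x|) μ :=
    (hφ.mul_bdd hubar (c := 1) hubar1).add hφ.abs
  have hu₀FON := hFON u₀
    (Measurable.ite (measurableSet_lt measurable_const hφm) measurable_const measurable_const
      |>.aestronglyMeasurable)
    (ae_of_all _ fun x => by by_cases h : 0 < φ x <;> simp [u₀, h])
  have hzero : ∫ x, φ x * ubar x + |φ x| ∂μ = 0 := by
    have hflip : ∫ x, φ x * ubar x + |φ x| ∂μ = -∫ x, φ x * (u₀ x - ubar x) ∂μ := by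
      rw [← integral_neg]
      congr 1 with x
      rw [mul_sub, hu₀]; ring
    exact le_antisymm (by linarith) (integral_nonneg_of_ae hgap)
  filter_upwards [(integral_eq_zero_iff_of_nonneg_ae hgap hint).1 hzero] with x hx
  linarith [show φ x * ubar x + |φ x| = 0 from hx]

theorem inv_mul_sq_integral_abs_le_integral_mul {w : α → ℝ} {C M : ℝ} (hC : 0 < C) (hM : 0 < M)
    (hφ : Measurable φ) (hlevel : ∀ ε > 0, μ {x | |φ x| ≤ ε} ≤ ENNReal.ofReal (C * ε))
    (hw : Integrable w μ) (hwM : ∀ᵐ x ∂μ, |w x| ≤ M) (hφw : Integrable (fun x => φ x * w x) μ)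
    (hsign : ∀ᵐ x ∂μ, φ x * w x = |φ x| * |w x|) :
    (4 * M * C)⁻¹ * (∫ x, |w x| ∂μ) ^ 2 ≤ ∫ x, φ x * w x ∂μ := by
  set N := ∫ x, |w x| ∂μ
  rw [integral_congr_ae hsign]
  have hint : Integrable (fun x => |φ x| * |w x|) μ := hφw.congr hsign
  have hnonneg : 0 ≤ ∫ x, |φ x| * |w x| ∂μ := integral_nonneg fun x => by positivity
  have hcut : ∀ ε > 0, ε * (N - M * C * ε) ≤ ∫ x, |φ x| * |w x| ∂μ := by
    intro ε hε
    set P := {x | ε < |φ x|}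
    have hP : MeasurableSet P := measurableSet_lt measurable_const hφ.abs
    have hsmall : ∫ x in Pᶜ, |w x| ∂μ ≤ M * C * ε := by
      have hPc : μ Pᶜ ≤ ENNReal.ofReal (C * ε) := by
        simpa [P, compl_ofPred, not_lt] using hlevel ε hε
      calc ∫ x in Pᶜ, |w x| ∂μ ≤ M * μ.real Pᶜ :=
            (le_abs_self _).trans <| by
              simpa using norm_setIntegral_le_of_norm_le_const_ae (f := fun x => |w x|)
                (hPc.trans_lt ENNReal.ofReal_lt_top) (ae_restrict_of_ae (by simpa using hwM))
        _ ≤ M * (C * ε) := by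
            gcongr
            exact ENNReal.toReal_le_of_le_ofReal (by positivity) hPc
        _ = M * C * ε := by ring
    have hlarge : ε * ∫ x in P, |w x| ∂μ ≤ ∫ x in P, |φ x| * |w x| ∂μ := by
      rw [← integral_const_mul]
      refine setIntegral_mono_on (hw.abs.integrableOn.const_mul ε) hint.integrableOn hP
        fun x hx => ?_
      exact mul_le_mul_of_nonneg_right hx.le (abs_nonneg _)
    calc ε * (N - M * C * ε) ≤ ε * ∫ x in P, |w x| ∂μ := by
          gcongr
          linarith [integral_add_compl hP hw.abs]
      _ ≤ ∫ x in P, |φ x| * |w x| ∂μ := hlarge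
      _ ≤ ∫ x, |φ x| * |w x| ∂μ :=
          setIntegral_le_integral hint (ae_of_all _ fun x => by positivity)
  have hN : 0 ≤ N := integral_nonneg fun x => abs_nonneg (w x)
  rcases hN.eq_or_lt with hN | hN
  · rw [← hN]; simpa using hnonneg
  · convert hcut (N / (2 * M * C)) (by positivity) using 1
    field_simp
    ring

end Growth

theorem stmt11_general (d : ℕ) (Ω : Set (EuclideanSpace ℝ (Fin d)))
    (hΩb : Bornology.IsBounded Ω)
    (φ : EuclideanSpace ℝ (Fin d) → ℝ) (hφ : ContDiff ℝ 1 φ)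
    (hstruct : ∀ x ∈ closure Ω, φ x = 0 → fderiv ℝ φ x ≠ 0)
    (ubar : EuclideanSpace ℝ (Fin d) → ℝ)
    (hubarmeas : AEStronglyMeasurable ubar (volume.restrict Ω))
    (hubar1 : ∀ᵐ x ∂(volume.restrict Ω), |ubar x| ≤ 1)
    (hFON : ∀ u : EuclideanSpace ℝ (Fin d) → ℝ,
      AEStronglyMeasurable u (volume.restrict Ω) →
      (∀ᵐ x ∂(volume.restrict Ω), |u x| ≤ 1) →
      0 ≤ ∫ x in Ω, φ x * (u x - ubar x)) :
    ∃ c : ℝ, 0 < c ∧ ∀ u : EuclideanSpace ℝ (Fin d) → ℝ,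
      AEStronglyMeasurable u (volume.restrict Ω) →
      (∀ᵐ x ∂(volume.restrict Ω), |u x| ≤ 1) →
      c * (∫ x in Ω, |u x - ubar x|) ^ 2 ≤ ∫ x in Ω, φ x * (u x - ubar x) := by
  have hK := hΩb.isCompact_closure
  have : IsFiniteMeasure (volume.restrict Ω) := isFiniteMeasure_restrict.2 hΩb.measure_lt_top.ne
  have hφm : Measurable φ := hφ.continuous.measurable
  obtain ⟨C, hC, hlevel⟩ :=
    (hK.linearSublevelBound (μ := volume) hφ hstruct).exists_forall_le hK.measure_lt_top.ne
  have hlevelΩ : ∀ ε > 0, volume.restrict Ω {x | |φ x| ≤ ε} ≤ ENNReal.ofReal (C * ε) := by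
    intro ε hε
    rw [Measure.restrict_apply (measurableSet_le hφm.abs measurable_const), inter_comm]
    exact (measure_mono (inter_subset_inter_left _ subset_closure)).trans (hlevel ε hε)
  have hφint : Integrable φ (volume.restrict Ω) :=
    (hφ.continuous.continuousOn.integrableOn_compact hK).mono_set subset_closure
  have hbang := ae_mul_eq_neg_abs_of_forall_integral_nonneg hφm hφint hubarmeas hubar1 hFON
  refine ⟨(4 * 2 * C)⁻¹, by positivity, fun u hu hu1 => ?_⟩
  have hw2 : ∀ᵐ x ∂(volume.restrict Ω), |u x - ubar x| ≤ 2 := by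
    filter_upwards [hu1, hubar1] with x h1 h2
    linarith [abs_sub (u x) (ubar x)]
  have hw : Integrable (fun x => u x - ubar x) (volume.restrict Ω) :=
    .of_bound (hu.sub hubarmeas) 2 (by simpa using hw2)
  refine inv_mul_sq_integral_abs_le_integral_mul hC two_pos hφm hlevelΩ hw hw2
    (hφint.mul_bdd (hu.sub hubarmeas) (c := 2) (by simpa using hw2)) ?_
  filter_upwards [hbang, hu1] with x hx hux
  exact mul_sub_eq_abs_mul_abs_of_mul_eq_neg_abs hux hx

/-- Under the structural assumption on the adjoint state `φ̄`, a
stationary point `ū` of the bang-bang control problem satisfies the quadratic growth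
inequality `∫_Ω φ̄ (u − ū) dλ^d ≥ c ‖u − ū‖_{L¹(Ω)}²` for all admissible `u`,
where `U_ad = {v ∈ L^∞(Ω) : |v| ≤ 1 a.e.}`. -/
theorem stmt11 (d : ℕ) (Ω : Set (EuclideanSpace ℝ (Fin d)))
    (hΩo : IsOpen Ω) (hΩb : Bornology.IsBounded Ω)
    (φ : EuclideanSpace ℝ (Fin d) → ℝ) (hφ : ContDiff ℝ 1 φ)
    (hstruct : ∀ x ∈ closure Ω, φ x = 0 → fderiv ℝ φ x ≠ 0)
    (ubar : EuclideanSpace ℝ (Fin d) → ℝ)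
    (hubarmeas : AEStronglyMeasurable ubar (volume.restrict Ω))
    (hubar1 : ∀ᵐ x ∂(volume.restrict Ω), |ubar x| ≤ 1)
    (hFON : ∀ u : EuclideanSpace ℝ (Fin d) → ℝ,
      AEStronglyMeasurable u (volume.restrict Ω) →
      (∀ᵐ x ∂(volume.restrict Ω), |u x| ≤ 1) →
      0 ≤ ∫ x in Ω, φ x * (u x - ubar x)) :
    ∃ c : ℝ, 0 < c ∧ ∀ u : EuclideanSpace ℝ (Fin d) → ℝ,
      AEStronglyMeasurable u (volume.restrict Ω) →
      (∀ᵐ x ∂(volume.restrict Ω), |u x| ≤ 1) →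
      c * (∫ x in Ω, |u x - ubar x|) ^ 2 ≤ ∫ x in Ω, φ x * (u x - ubar x) :=
  stmt11_general d Ω hΩb φ hφ hstruct ubar hubarmeas hubar1 hFON
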